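/- Let S be a decision rule system with n(S) > 0. Then max{d(S), β_EAR(S)} ≤ h_EAR(S) ≤ d(S)·β_EAR⁺(S). -/

import Mathlib

/- Common formal framework for decision rule systems and decision trees /
   acyclic decision graphs, following Durdymyradov & Moshkov. -/

attribute [local instance] Classical.propDecidable

noncomputable section

namespace DRS

/-- A decision rule `(a_{i₁}=δ₁) ∧ ⋯ ∧ (a_{i_m}=δ_m) → σ`:
`K` is the finite set of equations (attribute index, value), `rhs` is σ. -/
structure Rule where
  K : Finset (ℕ × ℕ)
  rhs : ℕ

/-- Well-formedness of a rule: the attributes on its left-hand side are pairwise different. -/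
def Rule.WF (r : Rule) : Prop := ∀ p ∈ r.K, ∀ q ∈ r.K, p.1 = q.1 → p = q

/-- A(r): the set of attributes of a rule. -/
def Rule.attrs (r : Rule) : Finset ℕ := r.K.image Prod.fst

/-- The length m of a rule. -/
def Rule.len (r : Rule) : ℕ := r.K.card

/-- A(S) -/
def attrs (S : Finset Rule) : Finset ℕ := S.biUnion Rule.attrs

/-- n(S) -/
def nPar (S : Finset Rule) : ℕ := (attrs S).card

/-- d(S): the maximum length of a rule of S. -/
def dPar (S : Finset Rule) : ℕ := S.sup Rule.len

/-- D(S): the set of right-hand sides. -/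
def rhsSet (S : Finset Rule) : Finset ℕ := S.image Rule.rhs

/-- V_S(a_i) -/
def VS (S : Finset Rule) (i : ℕ) : Finset ℕ :=
  ((S.biUnion Rule.K).filter fun p => p.1 = i).image Prod.snd

/-- k(S) -/
def kPar (S : Finset Rule) : ℕ := (attrs S).sup fun i => (VS S i).card

/-- Attribute values in trees are `Option ℕ`; `none` plays the role of the special value `*`.
`allowed S false i` is (the lift of) `V_S(a_i)`, and `allowed S true i` is `EV_S(a_i)`. -/
def allowed (S : Finset Rule) (ext : Bool) (i : ℕ) : Finset (Option ℕ) :=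
  (VS S i).image some ∪ (if ext then {none} else ∅)

/-- Consistency of an equation system over ω ∪ {*}. -/
def ConsistentE (E : Finset (ℕ × Option ℕ)) : Prop :=
  ∀ p ∈ E, ∀ q ∈ E, p.1 = q.1 → p.2 = q.2

/-- Lift the left-hand side of a rule to an equation system over ω ∪ {*}. -/
def liftK (K : Finset (ℕ × ℕ)) : Finset (ℕ × Option ℕ) :=
  K.image fun p => (p.1, some p.2)

/-- A finite directed labeled graph: the nodes are `0, …, n-1`, with a distinguished root,
each node carries either an attribute (working node) or a set of rules (terminal node),
and edges are labeled with elements of ω ∪ {*}. -/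
structure DGraph where
  n : ℕ
  root : ℕ
  label : ℕ → ℕ ⊕ Finset Rule
  edges : Finset (ℕ × Option ℕ × ℕ)

namespace DGraph

def step (G : DGraph) (u v : ℕ) : Prop := ∃ l, (u, l, v) ∈ G.edges

/-- The graph has no directed cycles. -/
def Acyclic (G : DGraph) : Prop := ∀ v, ¬ Relation.TransGen G.step v v

/-- A node is terminal if no edge leaves it. -/
def IsTerminal (G : DGraph) (v : ℕ) : Prop := ∀ e ∈ G.edges, e.1 ≠ v

/-- The set of rules attached to a (terminal) node. -/
def termSet (G : DGraph) (v : ℕ) : Finset Rule :=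
  Sum.elim (fun _ => (∅ : Finset Rule)) id (G.label v)

/-- `G` is an acyclic decision graph over the rule system `S`;
`ext = false` : branching over `V_S` (o-type), `ext = true` : branching over `EV_S` (e-type).
Terminal nodes are labeled with subsets of S; each working node is labeled with an
attribute `a` of `A(S)` and has exactly one leaving edge for every element of
`V_S(a)` (resp. `EV_S(a)`), the edges leaving it being labeled with these
pairwise different elements. -/
def IsDG (G : DGraph) (S : Finset Rule) (ext : Bool) : Prop :=
  G.root < G.n ∧
  (∀ e ∈ G.edges, e.1 < G.n ∧ e.2.2 < G.n) ∧
  G.Acyclic ∧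
  (∀ v < G.n,
    if G.IsTerminal v then
      ∃ Z : Finset Rule, G.label v = Sum.inr Z ∧ Z ⊆ S
    else
      ∃ a : ℕ, G.label v = Sum.inl a ∧ a ∈ attrs S ∧
        (∀ l : Option ℕ, (∃ w, (v, l, w) ∈ G.edges) ↔ l ∈ allowed S ext a) ∧
        (∀ l w w', (v, l, w) ∈ G.edges → (v, l, w') ∈ G.edges → w = w'))

/-- `G` is a finite directed tree with root: the root has no entering edge and every
other node has exactly one entering edge (together with acyclicity this makes the
graph a rooted tree). -/
def IsTree (G : DGraph) : Prop :=
  (∀ e ∈ G.edges, e.2.2 ≠ G.root) ∧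
  (∀ v < G.n, v ≠ G.root → ∃! e, e ∈ G.edges ∧ e.2.2 = v)

/-- `chainFrom G v p t`: the list `p` of (node, leaving-edge-label) pairs forms a
directed path in `G` starting at `v` and ending at `t`. -/
def chainFrom (G : DGraph) : ℕ → List (ℕ × Option ℕ) → ℕ → Prop
  | v, [], t => v = t
  | v, e :: rest, t => e.1 = v ∧ ∃ w, (v, e.2, w) ∈ G.edges ∧ chainFrom G w rest t

/-- A complete path: from the root to a terminal node; it is recorded by the list of
its working nodes with the labels of the edges taken, together with its terminal node. -/
def IsCompletePath (G : DGraph) (p : List (ℕ × Option ℕ)) (t : ℕ) : Prop :=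
  G.chainFrom G.root p t ∧ G.IsTerminal t ∧ t < G.n

/-- K(ξ): the equation system associated with a complete path. -/
def pathEqs (G : DGraph) (p : List (ℕ × Option ℕ)) : Finset (ℕ × Option ℕ) :=
  (p.filterMap fun e =>
    Sum.elim (fun a => some (a, e.2)) (fun _ => none) (G.label e.1)).toFinset

/-- L(Γ): the number of nodes. -/
def size (G : DGraph) : ℕ := G.n

/-- T(Γ): the number of terminal nodes labeled with pairwise different sets of rules. -/
def tCount (G : DGraph) : ℕ :=
  (((Finset.range G.n).filter fun v => G.IsTerminal v).image fun v => G.termSet v).card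

/-- h(Γ): the maximum number of working nodes on a complete path. -/
def depth (G : DGraph) : ℕ :=
  sSup {m | ∃ p t, G.IsCompletePath p t ∧ p.length = m}

/-- Path conditions for (the solutions of) the problems All Rules / EAll Rules. -/
def SolvesAR (G : DGraph) (S : Finset Rule) : Prop :=
  ∀ p t, G.IsCompletePath p t → ConsistentE (G.pathEqs p) →
    (∀ r ∈ G.termSet t, liftK r.K ⊆ G.pathEqs p) ∧
    (∀ r ∈ S, r ∉ G.termSet t → ¬ ConsistentE (liftK r.K ∪ G.pathEqs p))

/-- Path conditions for the problems All Decisions / EAll Decisions. -/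
def SolvesAD (G : DGraph) (S : Finset Rule) : Prop :=
  ∀ p t, G.IsCompletePath p t → ConsistentE (G.pathEqs p) →
    (∀ r ∈ G.termSet t, liftK r.K ⊆ G.pathEqs p) ∧
    (∀ r ∈ S, r ∉ G.termSet t → r.rhs ∉ (G.termSet t).image Rule.rhs →
      ¬ ConsistentE (liftK r.K ∪ G.pathEqs p))

/-- Path conditions for the problems Some Rules / ESome Rules. -/
def SolvesSR (G : DGraph) (S : Finset Rule) : Prop :=
  ∀ p t, G.IsCompletePath p t → ConsistentE (G.pathEqs p) →
    (∀ r ∈ G.termSet t, liftK r.K ⊆ G.pathEqs p) ∧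
    (G.termSet t = ∅ → ∀ r ∈ S, ¬ ConsistentE (liftK r.K ∪ G.pathEqs p))

end DGraph

/-- Γ is a decision tree over S solving AR(S) (an o-tree). -/
def TreeSolvesAR (S : Finset Rule) (G : DGraph) : Prop :=
  G.IsDG S false ∧ G.IsTree ∧ G.SolvesAR S
/-- Γ is a decision tree over S solving EAR(S) (an e-tree). -/
def TreeSolvesEAR (S : Finset Rule) (G : DGraph) : Prop :=
  G.IsDG S true ∧ G.IsTree ∧ G.SolvesAR S
/-- Γ is a decision tree over S solving AD(S) (an o-tree). -/
def TreeSolvesAD (S : Finset Rule) (G : DGraph) : Prop :=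
  G.IsDG S false ∧ G.IsTree ∧ G.SolvesAD S
/-- Γ is a decision tree over S solving EAD(S) (an e-tree). -/
def TreeSolvesEAD (S : Finset Rule) (G : DGraph) : Prop :=
  G.IsDG S true ∧ G.IsTree ∧ G.SolvesAD S
/-- Γ is a decision tree over S solving SR(S) (an o-tree). -/
def TreeSolvesSR (S : Finset Rule) (G : DGraph) : Prop :=
  G.IsDG S false ∧ G.IsTree ∧ G.SolvesSR S
/-- Γ is a decision tree over S solving ESR(S) (an e-tree). -/
def TreeSolvesESR (S : Finset Rule) (G : DGraph) : Prop :=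
  G.IsDG S true ∧ G.IsTree ∧ G.SolvesSR S

/-- L_AR(S): minimum number of nodes of a decision tree over S solving AR(S). -/
def L_AR (S : Finset Rule) : ℕ := sInf {m | ∃ G : DGraph, TreeSolvesAR S G ∧ G.size = m}
def L_EAR (S : Finset Rule) : ℕ := sInf {m | ∃ G : DGraph, TreeSolvesEAR S G ∧ G.size = m}
def L_AD (S : Finset Rule) : ℕ := sInf {m | ∃ G : DGraph, TreeSolvesAD S G ∧ G.size = m}
def L_EAD (S : Finset Rule) : ℕ := sInf {m | ∃ G : DGraph, TreeSolvesEAD S G ∧ G.size = m}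
def L_SR (S : Finset Rule) : ℕ := sInf {m | ∃ G : DGraph, TreeSolvesSR S G ∧ G.size = m}
def L_ESR (S : Finset Rule) : ℕ := sInf {m | ∃ G : DGraph, TreeSolvesESR S G ∧ G.size = m}

/-- T_AR(S): minimum number of differently-labeled terminal nodes of a decision tree
over S solving AR(S); similarly for the other problems. -/
def T_AR (S : Finset Rule) : ℕ := sInf {m | ∃ G : DGraph, TreeSolvesAR S G ∧ G.tCount = m}
def T_EAR (S : Finset Rule) : ℕ := sInf {m | ∃ G : DGraph, TreeSolvesEAR S G ∧ G.tCount = m}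
def T_AD (S : Finset Rule) : ℕ := sInf {m | ∃ G : DGraph, TreeSolvesAD S G ∧ G.tCount = m}
def T_EAD (S : Finset Rule) : ℕ := sInf {m | ∃ G : DGraph, TreeSolvesEAD S G ∧ G.tCount = m}
def T_SR (S : Finset Rule) : ℕ := sInf {m | ∃ G : DGraph, TreeSolvesSR S G ∧ G.tCount = m}
def T_ESR (S : Finset Rule) : ℕ := sInf {m | ∃ G : DGraph, TreeSolvesESR S G ∧ G.tCount = m}

/-- h_AR(S): minimum depth of a decision tree over S solving AR(S); similarly for the others. -/
def h_AR (S : Finset Rule) : ℕ := sInf {m | ∃ G : DGraph, TreeSolvesAR S G ∧ G.depth = m}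
def h_EAR (S : Finset Rule) : ℕ := sInf {m | ∃ G : DGraph, TreeSolvesEAR S G ∧ G.depth = m}
def h_AD (S : Finset Rule) : ℕ := sInf {m | ∃ G : DGraph, TreeSolvesAD S G ∧ G.depth = m}
def h_EAD (S : Finset Rule) : ℕ := sInf {m | ∃ G : DGraph, TreeSolvesEAD S G ∧ G.depth = m}
def h_SR (S : Finset Rule) : ℕ := sInf {m | ∃ G : DGraph, TreeSolvesSR S G ∧ G.depth = m}
def h_ESR (S : Finset Rule) : ℕ := sInf {m | ∃ G : DGraph, TreeSolvesESR S G ∧ G.depth = m}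

/-- L^DG_SR(S): minimum number of nodes of an acyclic decision graph solving SR(S). -/
def LDG_SR (S : Finset Rule) : ℕ :=
  sInf {m | ∃ G : DGraph, G.IsDG S false ∧ G.SolvesSR S ∧ G.size = m}
/-- L^DG_ESR(S): minimum number of nodes of an acyclic decision graph solving ESR(S). -/
def LDG_ESR (S : Finset Rule) : ℕ :=
  sInf {m | ∃ G : DGraph, G.IsDG S true ∧ G.SolvesSR S ∧ G.size = m}

/-- A node cover of the hypergraph G(S). -/
def IsNodeCover (S : Finset Rule) (B : Finset ℕ) : Prop :=
  B ⊆ attrs S ∧ ∀ r ∈ S, (Rule.attrs r).Nonempty → (Rule.attrs r ∩ B).Nonempty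

/-- β(S): the minimum cardinality of a node cover of the hypergraph G(S). -/
def beta (S : Finset Rule) : ℕ := sInf {c | ∃ B, IsNodeCover S B ∧ B.card = c}

/-- S⁺: the subsystem of S consisting of all rules of length d(S). -/
def Splus (S : Finset Rule) : Finset Rule := S.filter fun r => r.len = dPar S

/-- β⁺(S) = β(S⁺). -/
def betaPlus (S : Finset Rule) : ℕ := beta (Splus S)

/-- The rule r_α : delete from the left-hand side of r all equations belonging to α. -/
def Rule.restrict (r : Rule) (α : Finset (ℕ × Option ℕ)) : Rule :=
  ⟨r.K.filter fun p => (p.1, some p.2) ∉ α, r.rhs⟩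

/-- S_α : the system of the rules r_α for all r ∈ S with K(r) ∪ α consistent. -/
def restrict (S : Finset Rule) (α : Finset (ℕ × Option ℕ)) : Finset Rule :=
  (S.filter fun r => ConsistentE (liftK r.K ∪ α)).image fun r => r.restrict α

/-- E_C(S): consistent equation systems whose attributes are in A(S) and whose
values belong to V_S (ext = false) resp. EV_S (ext = true). -/
def ESys (S : Finset Rule) (ext : Bool) : Set (Finset (ℕ × Option ℕ)) :=
  {α | ConsistentE α ∧ ∀ p ∈ α, p.1 ∈ attrs S ∧ p.2 ∈ allowed S ext p.1}

/-- I_SR(S). -/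
def I_SR (S : Finset Rule) : Finset Rule :=
  if ∃ r ∈ S, r.len = 0 then S.filter fun r => r.len = 0 else S

/-- D₀(S): the right-hand sides of the rules of S of length 0. -/
def D0 (S : Finset Rule) : Finset ℕ := (S.filter fun r => r.len = 0).image Rule.rhs

/-- I_AD(S). -/
def I_AD (S : Finset Rule) : Finset Rule :=
  S.filter fun r => r.len = 0 ∨ r.rhs ∉ D0 S

def betaC (S : Finset Rule) (ext : Bool) : ℕ :=
  sSup {b | ∃ α ∈ ESys S ext, beta (restrict S α) = b}
def betaCplus (S : Finset Rule) (ext : Bool) : ℕ :=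
  sSup {b | ∃ α ∈ ESys S ext, betaPlus (restrict S α) = b}
def betaI (S : Finset Rule) (I : Finset Rule → Finset Rule) : ℕ :=
  sSup {b | ∃ α ∈ ESys S true, beta (I (restrict S α)) = b}
def betaIplus (S : Finset Rule) (I : Finset Rule → Finset Rule) : ℕ :=
  sSup {b | ∃ α ∈ ESys S true, betaPlus (I (restrict S α)) = b}

def beta_AR (S : Finset Rule) : ℕ := betaC S false
def beta_AD (S : Finset Rule) : ℕ := betaC S false
def beta_SR (S : Finset Rule) : ℕ := betaC S false
def beta_EAR (S : Finset Rule) : ℕ := betaC S true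
def beta_ARplus (S : Finset Rule) : ℕ := betaCplus S false
def beta_ADplus (S : Finset Rule) : ℕ := betaCplus S false
def beta_SRplus (S : Finset Rule) : ℕ := betaCplus S false
def beta_EARplus (S : Finset Rule) : ℕ := betaCplus S true
def beta_EAD (S : Finset Rule) : ℕ := betaI S I_AD
def beta_EADplus (S : Finset Rule) : ℕ := betaIplus S I_AD
def beta_ESR (S : Finset Rule) : ℕ := betaI S I_SR
def beta_ESRplus (S : Finset Rule) : ℕ := betaIplus S I_SR

/-- R_SR(S). -/
def R_SR (S : Finset Rule) : Finset Rule :=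
  S.filter fun r => ¬ ∃ r' ∈ S, r'.K ⊂ r.K

/-- R_AD(S). -/
def R_AD (S : Finset Rule) : Finset Rule :=
  S.filter fun r => ¬ ∃ r' ∈ S, r'.K ⊂ r.K ∧ r'.rhs = r.rhs

/-- A reduced decision rule system. -/
def Reduced (S : Finset Rule) : Prop :=
  attrs S ⊆ Finset.range (nPar S + 1) ∧
  rhsSet S ⊆ Finset.range ((rhsSet S).card + 1) ∧
  (∀ i ∈ attrs S, VS S i ⊆ Finset.range (kPar S + 1)) ∧
  1 ≤ dPar S

/-- Length of the binary representation of a natural number. -/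
def bitLen (m : ℕ) : ℕ := max 1 (Nat.size m)

/-- The length of the word "(a⟨i⟩=⟨δ⟩)" encoding one equation. -/
def eqLen (p : ℕ × ℕ) : ℕ := 4 + bitLen p.1 + bitLen p.2

/-- The length of the word encoding one rule (with the "∧" signs and "→"). -/
def Rule.wordLen (r : Rule) : ℕ :=
  (∑ p ∈ r.K, eqLen p) + (r.K.card - 1) + 1 + bitLen r.rhs

/-- size(S): the length of the word representing S (with ";" separating the rules). -/
def sizeS (S : Finset Rule) : ℕ := (∑ r ∈ S, r.wordLen) + (S.card - 1)

/-!
Lower bound. Let Γ be an e-tree solving EAR(S) and α ∈ E_EAR(S). Answering every query as α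
prescribes, and by `*` outside the attributes of α, leads to a complete path ξ with α ∪ K(ξ)
consistent. For a rule r of maximal length and α = K(r) this forces r into the terminal label,
so K(r) ⊆ K(ξ) and d(S) ≤ h(Γ). For general α, a rule of S_α is either in the terminal label,
hence confirmed by ξ, or contradicted by ξ on an attribute outside α; either way it meets the
attributes of K(ξ), which therefore cover G(S_α), and β(S_α) ≤ h(Γ).

Upper bound. The greedy e-tree works in rounds. With α the equations found so far, a round
queries a minimum node cover of G(S_α⁺), at most β⁺_EAR(S) attributes. Afterwards every rule of
S_α of maximal length is contradicted or has lost an equation, so d(S_α) decreases. After d(S)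
rounds the rules still compatible with the path are confirmed by it, and labelling the leaf with
them solves EAR(S).
-/

open Finset

lemma ConsistentE.mono {s t : Finset (ℕ × Option ℕ)} (h : s ⊆ t) (ht : ConsistentE t) :
    ConsistentE s := fun p hp q hq => ht p (h hp) q (h hq)

lemma consistentE_of_forall_eq {E : Finset (ℕ × Option ℕ)} (f : ℕ → Option ℕ)
    (h : ∀ z ∈ E, z.2 = f z.1) : ConsistentE E := fun p hp q hq hpq => by
  rw [h p hp, h q hq, hpq]

lemma ConsistentE.union {A B : Finset (ℕ × Option ℕ)} (hA : ConsistentE A) (hB : ConsistentE B)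
    (hAB : ∀ p ∈ A, ∀ q ∈ B, p.1 = q.1 → p.2 = q.2) : ConsistentE (A ∪ B) := by
  intro p hp q hq hpq
  rcases mem_union.1 hp with hp | hp <;> rcases mem_union.1 hq with hq | hq
  · exact hA p hp q hq hpq
  · exact hAB p hp q hq hpq
  · exact (hAB q hq p hp hpq.symm).symm
  · exact hB p hp q hq hpq

lemma mem_liftK {K : Finset (ℕ × ℕ)} {x : ℕ} {v : Option ℕ} :
    (x, v) ∈ liftK K ↔ ∃ δ, (x, δ) ∈ K ∧ some δ = v := by
  simp [liftK]

lemma card_liftK (K : Finset (ℕ × ℕ)) : (liftK K).card = K.card :=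
  card_image_of_injective _ fun p q h => by simpa [Prod.ext_iff] using h

lemma Rule.WF.consistentE_liftK {r : Rule} (h : r.WF) : ConsistentE (liftK r.K) := by
  rintro ⟨x, v⟩ hp ⟨y, w⟩ hq (rfl : x = y)
  obtain ⟨δ, hδ, rfl⟩ := mem_liftK.1 hp
  obtain ⟨ε, hε, rfl⟩ := mem_liftK.1 hq
  exact congrArg (some ·.2) (h _ hδ _ hε rfl)

lemma ConsistentE.eq_some_of_mem {K : Finset (ℕ × ℕ)} {β : Finset (ℕ × Option ℕ)}
    (h : ConsistentE (liftK K ∪ β)) {x δ : ℕ} {l : Option ℕ} (hK : (x, δ) ∈ K)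
    (hβ : (x, l) ∈ β) : l = some δ :=
  (h _ (mem_union_left _ (mem_liftK.2 ⟨δ, hK, rfl⟩)) _ (mem_union_right _ hβ) rfl).symm

lemma mem_VS {S : Finset Rule} {r : Rule} (hr : r ∈ S) {x δ : ℕ} (h : (x, δ) ∈ r.K) :
    δ ∈ VS S x :=
  mem_image.2 ⟨(x, δ), mem_filter.2 ⟨mem_biUnion.2 ⟨r, hr, h⟩, rfl⟩, rfl⟩

lemma some_mem_allowed {S : Finset Rule} {x δ : ℕ} (ext : Bool) (h : δ ∈ VS S x) :
    some δ ∈ allowed S ext x :=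
  mem_union_left _ (mem_image_of_mem _ h)

lemma none_mem_allowed (S : Finset Rule) (x : ℕ) : none ∈ allowed S true x := by
  simp [allowed]

lemma attrs_subset_of_mem {S : Finset Rule} {r : Rule} (hr : r ∈ S) : r.attrs ⊆ attrs S :=
  subset_biUnion_of_mem _ hr

lemma attrs_mono {S T : Finset Rule} (h : S ⊆ T) : attrs S ⊆ attrs T :=
  biUnion_subset_biUnion_of_subset_left _ h

def compatible (S : Finset Rule) (α : Finset (ℕ × Option ℕ)) : Finset Rule :=
  S.filter fun r => ConsistentE (liftK r.K ∪ α)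

section Restrict

variable {S : Finset Rule} {α β : Finset (ℕ × Option ℕ)} {r : Rule}

lemma mem_restrict {r' : Rule} :
    r' ∈ restrict S α ↔ ∃ r ∈ S, ConsistentE (liftK r.K ∪ α) ∧ r.restrict α = r' := by
  simp [restrict, and_assoc]

lemma restrict_mem_restrict (hr : r ∈ compatible S α) : r.restrict α ∈ restrict S α :=
  mem_image_of_mem _ hr

lemma Rule.mem_restrict_K {p : ℕ × ℕ} : p ∈ (r.restrict α).K ↔ p ∈ r.K ∧ (p.1, some p.2) ∉ α :=
  mem_filter

lemma Rule.restrict_K_subset (h : α ⊆ β) : (r.restrict β).K ⊆ (r.restrict α).K := fun _ hp => by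
  rw [Rule.mem_restrict_K] at hp ⊢
  exact ⟨hp.1, fun hα => hp.2 (h hα)⟩

lemma Rule.len_restrict_le : (r.restrict α).len ≤ r.len := card_filter_le _ _

lemma Rule.len_restrict_eq_zero_iff : (r.restrict α).len = 0 ↔ liftK r.K ⊆ α := by
  rw [Rule.len, Rule.restrict, card_eq_zero, filter_eq_empty_iff, liftK, image_subset_iff]
  simp only [not_not]

lemma attrs_restrict_subset : attrs (restrict S α) ⊆ attrs S := by
  intro x hx
  obtain ⟨r', hr', hx⟩ := mem_biUnion.1 hx
  obtain ⟨r, hr, -, rfl⟩ := mem_restrict.1 hr'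
  exact attrs_subset_of_mem hr (image_subset_image (filter_subset _ _) hx)

lemma dPar_restrict_le : dPar (restrict S α) ≤ dPar S :=
  Finset.sup_le fun r' hr' => by
    obtain ⟨r, hr, -, rfl⟩ := mem_restrict.1 hr'
    exact Rule.len_restrict_le.trans (le_sup hr)

lemma consistentE_of_mem_restrict {r' : Rule} (h : r' ∈ restrict S α) : ConsistentE α := by
  obtain ⟨r, -, hc, -⟩ := mem_restrict.1 h
  exact hc.mono subset_union_right

end Restrict

lemma isNodeCover_attrs (T : Finset Rule) : IsNodeCover T (attrs T) :=
  ⟨Subset.rfl, fun _ hr ⟨a, ha⟩ => ⟨a, mem_inter.2 ⟨ha, attrs_subset_of_mem hr ha⟩⟩⟩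

lemma beta_le_card {T : Finset Rule} {B : Finset ℕ} (h : IsNodeCover T B) : beta T ≤ B.card :=
  Nat.sInf_le ⟨B, h, rfl⟩

lemma exists_isNodeCover_card_eq_beta (T : Finset Rule) :
    ∃ B, IsNodeCover T B ∧ B.card = beta T :=
  Nat.sInf_mem (s := {c | ∃ B, IsNodeCover T B ∧ B.card = c}) ⟨_, _, isNodeCover_attrs T, rfl⟩

def minCover (T : Finset Rule) : Finset ℕ := (exists_isNodeCover_card_eq_beta T).choose

lemma minCover_isNodeCover (T : Finset Rule) : IsNodeCover T (minCover T) :=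
  (exists_isNodeCover_card_eq_beta T).choose_spec.1

lemma card_minCover (T : Finset Rule) : (minCover T).card = beta T :=
  (exists_isNodeCover_card_eq_beta T).choose_spec.2

/-- The conditions on `α ∈ E_EAR(S)` other than consistency. -/
def Admissible (S : Finset Rule) (α : Finset (ℕ × Option ℕ)) : Prop :=
  ∀ p ∈ α, p.1 ∈ attrs S ∧ p.2 ∈ allowed S true p.1

lemma betaPlus_restrict_le {S : Finset Rule} {α : Finset (ℕ × Option ℕ)} (hα : Admissible S α) :
    betaPlus (restrict S α) ≤ beta_EARplus S := by
  by_cases hc : ConsistentE α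
  · refine le_csSup ⟨nPar S, ?_⟩ ⟨α, ⟨hc, hα⟩, rfl⟩
    rintro _ ⟨β, -, rfl⟩
    exact (beta_le_card (isNodeCover_attrs _)).trans
      (card_le_card ((attrs_mono (filter_subset _ _)).trans attrs_restrict_subset))
  · have : restrict S α = ∅ :=
      eq_empty_of_forall_notMem fun _ hr' => hc (consistentE_of_mem_restrict hr')
    rw [this]
    exact (beta_le_card (isNodeCover_attrs _)).trans (by simp [Splus, attrs])

namespace DGraph

variable {G : DGraph} {S : Finset Rule} {ext : Bool} {P : List (ℕ × Option ℕ)} {u : ℕ}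

lemma mem_pathEqs {q : ℕ × Option ℕ} :
    q ∈ G.pathEqs P ↔ ∃ e ∈ P, G.label e.1 = .inl q.1 ∧ e.2 = q.2 := by
  simp only [pathEqs, List.mem_toFinset, List.mem_filterMap]
  refine exists_congr fun e => and_congr_right fun _ => ?_
  rcases G.label e.1 with a | Z <;> simp [Prod.ext_iff, eq_comm]

lemma pathEqs_cons {e : ℕ × Option ℕ} {a : ℕ} (h : G.label e.1 = .inl a) :
    G.pathEqs (e :: P) = insert (a, e.2) (G.pathEqs P) := by
  simp [pathEqs, h]

lemma card_pathEqs_le (P : List (ℕ × Option ℕ)) : (G.pathEqs P).card ≤ P.length :=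
  (List.toFinset_card_le _).trans (List.length_filterMap_le _ _)

lemma chainFrom_mem : ∀ {v : ℕ} {P : List (ℕ × Option ℕ)}, G.chainFrom v P u → ∀ e ∈ P,
    Relation.ReflTransGen G.step v e.1 ∧ ∃ w, (e.1, e.2, w) ∈ G.edges
  | _, [], _, _, he => absurd he List.not_mem_nil
  | _, _ :: _, ⟨rfl, w, hw, hP⟩, e, he => by
    rcases List.mem_cons.1 he with rfl | he
    · exact ⟨.refl, w, hw⟩
    · obtain ⟨hr, hw'⟩ := chainFrom_mem hP e he
      exact ⟨.head ⟨_, hw⟩ hr, hw'⟩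

lemma Acyclic.nodup_chainFrom (hG : G.Acyclic) :
    ∀ {v : ℕ} {P : List (ℕ × Option ℕ)}, G.chainFrom v P u → (P.map Prod.fst).Nodup
  | _, [], _ => List.nodup_nil
  | _, e :: _, ⟨rfl, w, hw, hP⟩ => by
    refine List.nodup_cons.2 ⟨fun he => ?_, hG.nodup_chainFrom hP⟩
    obtain ⟨e', he', heq⟩ := List.mem_map.1 he
    exact hG e.1 (.head' ⟨_, hw⟩ (heq ▸ (chainFrom_mem hP e' he').1))

lemma IsDG.length_le (hdg : G.IsDG S ext) (hP : G.IsCompletePath P u) : P.length ≤ G.n := by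
  rw [← List.length_map (f := Prod.fst), ← List.toFinset_card_of_nodup
    (hdg.2.2.1.nodup_chainFrom hP.1), ← card_range G.n]
  refine card_le_card fun x hx => ?_
  obtain ⟨e, he, rfl⟩ := List.mem_map.1 (List.mem_toFinset.1 hx)
  obtain ⟨w, hw⟩ := (chainFrom_mem hP.1 e he).2
  exact mem_range.2 (hdg.2.1 _ hw).1

lemma IsDG.card_pathEqs_le_depth (hdg : G.IsDG S ext) (hP : G.IsCompletePath P u) :
    (G.pathEqs P).card ≤ G.depth :=
  (card_pathEqs_le P).trans <|
    le_csSup ⟨G.n, by rintro _ ⟨P', u', hP', rfl⟩; exact hdg.length_le hP'⟩ ⟨P, u, hP, rfl⟩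

lemma Acyclic.wellFounded_fin (hG : G.Acyclic) : WellFounded fun v w : Fin G.n => G.step w v := by
  have : Std.Irrefl (Relation.TransGen fun v w : Fin G.n => G.step w v) :=
    ⟨fun v hv => hG v (Relation.TransGen.swap _ _
      (Relation.TransGen.lift Fin.val (p := fun x y => G.step y x) (fun _ _ h => h) _ _ hv))⟩
  exact Subrelation.wf (r := Relation.TransGen fun v w : Fin G.n => G.step w v)
    (fun h => .single h) (Finite.wellFounded_of_trans_of_irrefl _)

lemma IsDG.exists_completePath (hdg : G.IsDG S ext) (choice : ℕ → Option ℕ)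
    (hch : ∀ a ∈ attrs S, choice a ∈ allowed S ext a) :
    ∃ P u, G.IsCompletePath P u ∧ ∀ q ∈ G.pathEqs P, q.2 = choice q.1 := by
  obtain ⟨hroot, hedge, hacyc, hnode⟩ := hdg
  have hrun : ∀ v : Fin G.n, ∃ P u, G.chainFrom v P u ∧ G.IsTerminal u ∧ u < G.n ∧
      ∀ e ∈ P, ∀ a, G.label e.1 = .inl a → e.2 = choice a := by
    intro v
    induction v using hacyc.wellFounded_fin.induction with | h v ih => ?_
    by_cases hv : G.IsTerminal v
    · exact ⟨[], v, rfl, hv, v.2, by simp⟩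
    obtain ⟨a, hlab, ha, hout, -⟩ := by simpa [hv] using hnode v v.2
    obtain ⟨w, hw⟩ := (hout _).2 (hch a ha)
    obtain ⟨P, u, hP, hu, hun, hPc⟩ := ih ⟨w, (hedge _ hw).2⟩ ⟨_, hw⟩
    refine ⟨(v, choice a) :: P, u, ⟨rfl, w, hw, hP⟩, hu, hun, ?_⟩
    rintro e he a' ha'
    rcases List.mem_cons.1 he with rfl | he
    · rw [hlab] at ha'
      cases ha'
      rfl
    · exact hPc e he a' ha'
  obtain ⟨P, u, hP, hu, hun, hPc⟩ := hrun ⟨G.root, hroot⟩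
  refine ⟨P, u, ⟨hP, hu, hun⟩, fun q hq => ?_⟩
  obtain ⟨e, he, hlab, hval⟩ := mem_pathEqs.1 hq
  exact hval ▸ hPc e he _ hlab

lemma IsDG.exists_completePath_consistentE_union (hdg : G.IsDG S true)
    {α : Finset (ℕ × Option ℕ)} (hα : α ∈ ESys S true) :
    ∃ P u, G.IsCompletePath P u ∧ ConsistentE (α ∪ G.pathEqs P) := by
  let choice : ℕ → Option ℕ := fun x => if h : ∃ v, (x, v) ∈ α then h.choose else none
  have hchoice : ∀ p ∈ α, choice p.1 = p.2 := fun p hp => by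
    have h : ∃ v, (p.1, v) ∈ α := ⟨p.2, hp⟩
    simp only [choice, dif_pos h]
    exact hα.1 _ h.choose_spec _ hp rfl
  obtain ⟨P, u, hP, hPc⟩ := hdg.exists_completePath choice fun a _ => by
    by_cases h : ∃ v, (a, v) ∈ α
    · simp only [choice, dif_pos h]
      exact (hα.2 _ h.choose_spec).2
    · simp only [choice, dif_neg h]
      exact none_mem_allowed S a
  refine ⟨P, u, hP, consistentE_of_forall_eq choice fun z hz => ?_⟩
  exact (mem_union.1 hz).elim (fun h => (hchoice z h).symm) (hPc z)

lemma SolvesAR.liftK_subset (hsolve : G.SolvesAR S) (hP : G.IsCompletePath P u) {r : Rule}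
    (hr : r ∈ S) (hc : ConsistentE (liftK r.K ∪ G.pathEqs P)) : liftK r.K ⊆ G.pathEqs P := by
  obtain ⟨hin, hout⟩ := hsolve P u hP (hc.mono subset_union_right)
  by_cases hru : r ∈ G.termSet u
  · exact hin r hru
  · exact absurd hc (hout r hr hru)

end DGraph

section LowerBound

open DGraph

variable {S : Finset Rule} {G : DGraph}

lemma liftK_mem_ESys {r : Rule} (hwf : r.WF) (hr : r ∈ S) : liftK r.K ∈ ESys S true := by
  refine ⟨hwf.consistentE_liftK, ?_⟩
  rintro ⟨x, v⟩ hp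
  obtain ⟨δ, hδ, rfl⟩ := mem_liftK.1 hp
  exact ⟨attrs_subset_of_mem hr (mem_image_of_mem Prod.fst hδ), some_mem_allowed _ (mem_VS hr hδ)⟩

lemma len_le_depth (hdg : G.IsDG S true) (hsolve : G.SolvesAR S) {r : Rule} (hr : r ∈ S)
    (hwf : r.WF) : r.len ≤ G.depth := by
  obtain ⟨P, u, hP, hc⟩ := hdg.exists_completePath_consistentE_union (liftK_mem_ESys hwf hr)
  calc r.len = (liftK r.K).card := (card_liftK _).symm
    _ ≤ (G.pathEqs P).card := card_le_card (hsolve.liftK_subset hP hr hc)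
    _ ≤ G.depth := hdg.card_pathEqs_le_depth hP

lemma beta_restrict_le_depth (hdg : G.IsDG S true) (hsolve : G.SolvesAR S)
    (hwf : ∀ r ∈ S, r.WF) {α : Finset (ℕ × Option ℕ)} (hα : α ∈ ESys S true) :
    beta (restrict S α) ≤ G.depth := by
  obtain ⟨P, u, hP, hc⟩ := hdg.exists_completePath_consistentE_union hα
  set B := (G.pathEqs P).image Prod.fst ∩ attrs (restrict S α)
  have hcov : IsNodeCover (restrict S α) B := by
    refine ⟨inter_subset_right, fun r' hr' hne => ?_⟩
    suffices ∃ x ∈ r'.attrs, x ∈ (G.pathEqs P).image Prod.fst from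
      this.imp fun x hx => mem_inter.2 ⟨hx.1, mem_inter.2 ⟨hx.2, attrs_subset_of_mem hr' hx.1⟩⟩
    obtain ⟨r, hr, -, rfl⟩ := mem_restrict.1 hr'
    by_cases hcross : ∀ p ∈ liftK r.K, ∀ q ∈ G.pathEqs P, p.1 = q.1 → p.2 = q.2
    · have hsub := hsolve.liftK_subset hP hr
        ((hwf r hr).consistentE_liftK.union (hc.mono subset_union_right) hcross)
      obtain ⟨x, hx⟩ := hne
      obtain ⟨⟨x, δ⟩, hδ, rfl⟩ := mem_image.1 hx
      exact ⟨x, hx, mem_image.2 ⟨_, hsub (mem_liftK.2 ⟨δ, (Rule.mem_restrict_K.1 hδ).1, rfl⟩), rfl⟩⟩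
    push Not at hcross
    obtain ⟨⟨x, v⟩, hp, ⟨y, l⟩, hq, rfl, hne⟩ := hcross
    obtain ⟨δ, hδ, rfl⟩ := mem_liftK.1 hp
    have hδα : (x, some δ) ∉ α := fun h =>
      hne (hc _ (mem_union_left _ h) _ (mem_union_right _ hq) rfl)
    exact ⟨x, mem_image_of_mem _ (Rule.mem_restrict_K.2 ⟨hδ, hδα⟩), mem_image_of_mem _ hq⟩
  calc beta (restrict S α) ≤ B.card := beta_le_card hcov
    _ ≤ ((G.pathEqs P).image Prod.fst).card := card_le_card inter_subset_left
    _ ≤ (G.pathEqs P).card := card_image_le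
    _ ≤ G.depth := hdg.card_pathEqs_le_depth hP

end LowerBound

/-- An e-tree as an inductive type; of the branches `f l` of `query a f` only those with
`l ∈ EV_S(a)` are used. -/
inductive Strategy : Type
  | leaf : Finset Rule → Strategy
  | query : ℕ → (Option ℕ → Strategy) → Strategy

namespace Strategy

def Over (S : Finset Rule) : Strategy → Prop
  | leaf Z => Z ⊆ S
  | query a f => a ∈ attrs S ∧ ∀ l, (f l).Over S

inductive Reaches (S : Finset Rule) : Strategy → Finset (ℕ × Option ℕ) → ℕ → Finset Rule → Prop
  | leaf (Z : Finset Rule) : Reaches S (leaf Z) ∅ 0 Z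
  | query {a : ℕ} {f : Option ℕ → Strategy} {l : Option ℕ} {E : Finset (ℕ × Option ℕ)} {m : ℕ}
      {Z : Finset Rule} :
      l ∈ allowed S true a → Reaches S (f l) E m Z →
        Reaches S (query a f) (insert (a, l) E) (m + 1) Z

def subtree (S : Finset Rule) : Strategy → List (Option ℕ) → Option Strategy
  | t, [] => some t
  | leaf _, _ :: _ => none
  | query a f, l :: p => if l ∈ allowed S true a then (f l).subtree S p else none

def positions (S : Finset Rule) : Strategy → Finset (List (Option ℕ))
  | leaf _ => {[]}
  | query a f => insert [] ((allowed S true a).biUnion fun l => ((f l).positions S).image (l :: ·))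

variable {S : Finset Rule} {t : Strategy}

@[simp] lemma subtree_nil : t.subtree S [] = some t := by
  cases t <;> rfl

lemma mem_positions_iff {p : List (Option ℕ)} : p ∈ t.positions S ↔ (t.subtree S p).isSome := by
  induction t generalizing p with
  | leaf Z => cases p <;> simp [positions, subtree]
  | query a f ih =>
    cases p with
    | nil => simp [positions]
    | cons l q =>
      by_cases hl : l ∈ allowed S true a
      · simp [positions, subtree, hl, ← ih]
      · simp [positions, subtree, hl]

lemma subtree_append (p q : List (Option ℕ)) :
    t.subtree S (p ++ q) = (t.subtree S p).bind (·.subtree S q) := by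
  induction p generalizing t with
  | nil => simp
  | cons l p ih =>
    cases t with
    | leaf Z => simp [subtree]
    | query a f => by_cases hl : l ∈ allowed S true a <;> simp [subtree, hl, ih]

lemma subtree_append_singleton {p : List (Option ℕ)} {a : ℕ} {f : Option ℕ → Strategy}
    (hp : t.subtree S p = some (query a f)) {l : Option ℕ} (hl : l ∈ allowed S true a) :
    t.subtree S (p ++ [l]) = some (f l) := by
  simp [subtree_append, hp, subtree, hl]

lemma exists_of_append_singleton_mem_positions {p : List (Option ℕ)} {l : Option ℕ}
    (h : p ++ [l] ∈ t.positions S) :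
    ∃ a f, t.subtree S p = some (query a f) ∧ l ∈ allowed S true a := by
  rw [mem_positions_iff, subtree_append] at h
  rcases hp : t.subtree S p with _ | _ | ⟨a, f⟩ <;> rw [hp] at h
  · simp at h
  · simp [subtree] at h
  · by_cases hl : l ∈ allowed S true a
    · exact ⟨a, f, rfl, hl⟩
    · simp [subtree, hl] at h

lemma Over.subtree (ht : t.Over S) {p : List (Option ℕ)} {t' : Strategy}
    (h : t.subtree S p = some t') : t'.Over S := by
  induction p generalizing t with
  | nil => simp_all
  | cons l p ih =>
    cases t with
    | leaf Z => simp [Strategy.subtree] at h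
    | query a f =>
      by_cases hl : l ∈ allowed S true a
      · simp only [Strategy.subtree, hl, if_true] at h
        exact ih (ht.2 l) h
      · simp [Strategy.subtree, hl] at h

def index (S : Finset Rule) (t : Strategy) (p : List (Option ℕ)) : ℕ :=
  if h : p ∈ t.positions S then (t.positions S).equivFin ⟨p, h⟩ else 0

def position (S : Finset Rule) (t : Strategy) (i : ℕ) : List (Option ℕ) :=
  if h : i < (t.positions S).card then ((t.positions S).equivFin.symm ⟨i, h⟩ : List _) else []

def nodeLabel : Option Strategy → ℕ ⊕ Finset Rule
  | some (leaf Z) => .inr Z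
  | some (query a _) => .inl a
  | none => .inr ∅

def branches (S : Finset Rule) : Option Strategy → Finset (Option ℕ)
  | some (query a _) => allowed S true a
  | _ => ∅

/-- The nodes are the positions of `t` (lists of answers from the root), numbered through
`Finset.equivFin`. -/
def toDGraph (S : Finset Rule) (t : Strategy) : DGraph where
  n := (t.positions S).card
  root := t.index S []
  label i := nodeLabel (t.subtree S (t.position S i))
  edges := (t.positions S).biUnion fun p =>
    (branches S (t.subtree S p)).image fun l => (t.index S p, l, t.index S (p ++ [l]))

variable {p q : List (Option ℕ)} {i : ℕ}

lemma index_lt (hp : p ∈ t.positions S) : t.index S p < (t.toDGraph S).n := by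
  simp only [index, dif_pos hp]
  exact Fin.isLt _

lemma position_index (hp : p ∈ t.positions S) : t.position S (t.index S p) = p := by
  simp [position, index, hp]

lemma position_mem (hi : i < (t.toDGraph S).n) : t.position S i ∈ t.positions S := by
  simp only [position, dif_pos (show i < (t.positions S).card from hi)]
  exact Subtype.prop _

lemma index_position (hi : i < (t.toDGraph S).n) : t.index S (t.position S i) = i := by
  simp only [index, dif_pos (position_mem hi)]
  simp [position, show i < (t.positions S).card from hi]

lemma index_injective (hp : p ∈ t.positions S) (hq : q ∈ t.positions S)
    (h : t.index S p = t.index S q) : p = q := by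
  rw [← position_index hp, h, position_index hq]

lemma nil_mem_positions : [] ∈ t.positions S := by
  simp [mem_positions_iff]

lemma mem_branches {o : Option Strategy} {l : Option ℕ} :
    l ∈ branches S o ↔ ∃ a f, o = some (query a f) ∧ l ∈ allowed S true a := by
  rcases o with _ | _ | ⟨a, f⟩ <;> simp [branches]

lemma mem_edges_iff {e : ℕ × Option ℕ × ℕ} :
    e ∈ (t.toDGraph S).edges ↔ ∃ p a f l, p ∈ t.positions S ∧
      t.subtree S p = some (query a f) ∧ l ∈ allowed S true a ∧
      e = (t.index S p, l, t.index S (p ++ [l])) := by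
  simp only [toDGraph, mem_biUnion, mem_image, mem_branches]
  constructor
  · rintro ⟨p, hp, l, ⟨a, f, hpa, hl⟩, rfl⟩
    exact ⟨p, a, f, l, hp, hpa, hl, rfl⟩
  · rintro ⟨p, a, f, l, hp, hpa, hl, rfl⟩
    exact ⟨p, hp, l, ⟨a, f, hpa, hl⟩, rfl⟩

lemma label_eq (hi : i = t.index S p) (hp : p ∈ t.positions S) :
    (t.toDGraph S).label i = nodeLabel (t.subtree S p) := by
  rw [hi]
  simp only [toDGraph, position_index hp]

lemma mem_edges_elim {u w : ℕ} {l : Option ℕ} (he : (u, l, w) ∈ (t.toDGraph S).edges) :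
    ∃ p a f, p ∈ t.positions S ∧ t.subtree S p = some (query a f) ∧ l ∈ allowed S true a ∧
      p ++ [l] ∈ t.positions S ∧ u = t.index S p ∧ w = t.index S (p ++ [l]) := by
  obtain ⟨p, a, f, l, hp, hpa, hl, he⟩ := mem_edges_iff.1 he
  simp only [Prod.mk.injEq] at he
  obtain ⟨rfl, rfl, rfl⟩ := he
  exact ⟨p, a, f, hp, hpa, hl,
    mem_positions_iff.2 (by simp [subtree_append_singleton hpa hl]), rfl, rfl⟩

lemma isTerminal_iff (hp : p ∈ t.positions S) :
    (t.toDGraph S).IsTerminal (t.index S p) ↔ ∃ Z, t.subtree S p = some (leaf Z) := by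
  constructor
  · intro hterm
    rcases hsub : t.subtree S p with _ | Z | ⟨a, f⟩
    · simp [mem_positions_iff, hsub] at hp
    · exact ⟨Z, rfl⟩
    · exact absurd rfl
        (hterm _ (mem_edges_iff.2 ⟨p, a, f, none, hp, hsub, none_mem_allowed S a, rfl⟩))
  · rintro ⟨Z, hZ⟩ e he hei
    obtain ⟨q, a, f, l, hq, hqa, -, rfl⟩ := mem_edges_iff.1 he
    rw [index_injective hq hp hei, hZ] at hqa
    cases hqa

lemma position_lt_of_step {u w : ℕ} (h : (t.toDGraph S).step u w) :
    (t.position S u).length < (t.position S w).length := by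
  obtain ⟨l, he⟩ := h
  obtain ⟨p, -, -, hp, -, -, hpl, rfl, rfl⟩ := mem_edges_elim he
  simp [position_index hp, position_index hpl]

lemma edge_from {v w : ℕ} {l : Option ℕ} (hv : v < (t.toDGraph S).n)
    (he : (v, l, w) ∈ (t.toDGraph S).edges) :
    ∃ a f, t.subtree S (t.position S v) = some (query a f) ∧ l ∈ allowed S true a ∧
      w = t.index S (t.position S v ++ [l]) := by
  obtain ⟨p, a, f, hp, hpa, hl, -, rfl, rfl⟩ := mem_edges_elim he
  rw [position_index hp]
  exact ⟨a, f, hpa, hl, rfl⟩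

lemma acyclic_toDGraph : (t.toDGraph S).Acyclic := fun v hv => by
  have : Relation.TransGen (· < ·) (t.position S v).length (t.position S v).length :=
    Relation.TransGen.lift (fun u => (t.position S u).length)
      (fun _ _ => position_lt_of_step) _ _ hv
  exact lt_irrefl _ (Relation.transGen_eq_self (r := ((· < ·) : ℕ → ℕ → Prop)) ▸ this)

lemma isDG_toDGraph (ht : t.Over S) : (t.toDGraph S).IsDG S true := by
  refine ⟨index_lt nil_mem_positions, fun ⟨u, l, w⟩ he => ?_, acyclic_toDGraph, fun v hv => ?_⟩
  · obtain ⟨p, -, -, hp, -, -, hpl, rfl, rfl⟩ := mem_edges_elim he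
    exact ⟨index_lt hp, index_lt hpl⟩
  have hp := position_mem hv
  have hidx := index_position hv
  rcases hsub : t.subtree S (t.position S v) with _ | Z | ⟨a, f⟩
  · simp [mem_positions_iff, hsub] at hp
  · have hterm : (t.toDGraph S).IsTerminal v := hidx ▸ (isTerminal_iff hp).2 ⟨Z, hsub⟩
    rw [if_pos hterm]
    exact ⟨Z, by rw [label_eq hidx.symm hp, hsub]; rfl, ht.subtree hsub⟩
  · have hterm : ¬ (t.toDGraph S).IsTerminal v := by
      rw [← hidx, isTerminal_iff hp, hsub]
      simp
    rw [if_neg hterm]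
    refine ⟨a, by rw [label_eq hidx.symm hp, hsub]; rfl, (ht.subtree hsub).1, fun l => ⟨?_, ?_⟩,
      fun l w w' hw hw' => ?_⟩
    · rintro ⟨w, hw⟩
      obtain ⟨a', f', hsub', hl, -⟩ := edge_from hv hw
      rw [hsub] at hsub'
      cases hsub'
      exact hl
    · intro hl
      exact ⟨_, mem_edges_iff.2 ⟨_, a, f, l, hp, hsub, hl, by rw [hidx]⟩⟩
    · obtain ⟨-, -, -, -, rfl⟩ := edge_from hv hw
      obtain ⟨-, -, -, -, rfl⟩ := edge_from hv hw'
      rfl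

lemma isTree_toDGraph : (t.toDGraph S).IsTree := by
  refine ⟨fun ⟨u, l, w⟩ he hroot => ?_, fun v hv hroot => ?_⟩
  · obtain ⟨p, -, -, -, -, -, hpl, -, rfl⟩ := mem_edges_elim he
    have := index_injective hpl nil_mem_positions hroot
    simp at this
  have hp := position_mem hv
  have hidx := index_position hv
  obtain hnil | ⟨p, l, hpl⟩ := List.eq_nil_or_concat (t.position S v)
  · exact absurd (by rw [← hidx, hnil]; rfl) hroot
  rw [List.concat_eq_append] at hpl
  obtain ⟨a, f, hpa, hl⟩ := exists_of_append_singleton_mem_positions (hpl ▸ hp)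
  have hpos : p ∈ t.positions S := mem_positions_iff.2 (by simp [hpa])
  refine ⟨(t.index S p, l, v), ⟨mem_edges_iff.2 ⟨p, a, f, l, hpos, hpa, hl, ?_⟩, rfl⟩, ?_⟩
  · rw [← hpl, hidx]
  rintro ⟨u, l', w⟩ ⟨he, rfl : w = v⟩
  obtain ⟨q, -, -, hq, -, -, hql, rfl, hw⟩ := mem_edges_elim he
  have heq : q ++ [l'] = p ++ [l] := hpl ▸ index_injective hql hp (hw.symm.trans hidx.symm)
  obtain ⟨rfl, hl'⟩ := List.append_inj' heq rfl
  simp only [List.cons.injEq, and_true] at hl'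
  rw [hl']

lemma reaches_of_chainFrom {u : ℕ} (hu : (t.toDGraph S).IsTerminal u) :
    ∀ {P : List (ℕ × Option ℕ)} {p : List (Option ℕ)} {t' : Strategy}, p ∈ t.positions S →
      t.subtree S p = some t' → (t.toDGraph S).chainFrom (t.index S p) P u →
      Reaches S t' ((t.toDGraph S).pathEqs P) P.length ((t.toDGraph S).termSet u)
  | [], p, t', hp, hpt, hc => by
    obtain rfl : t.index S p = u := hc
    obtain ⟨Z, hZ⟩ := (isTerminal_iff hp).1 hu
    rw [hZ] at hpt
    cases hpt
    simp only [DGraph.termSet, label_eq rfl hp, hZ]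
    exact .leaf Z
  | e :: P, p, t', hp, hpt, ⟨he, w, hw, hP⟩ => by
    obtain ⟨q, a, f, hq, hqa, hl, hql, hqp, rfl⟩ := mem_edges_elim hw
    obtain rfl := index_injective hp hq hqp
    rw [hqa] at hpt
    cases hpt
    rw [DGraph.pathEqs_cons (by rw [label_eq he hp, hqa]; rfl)]
    exact .query hl (reaches_of_chainFrom hu hql (subtree_append_singleton hqa hl) hP)

lemma reaches_of_isCompletePath {P : List (ℕ × Option ℕ)} {u : ℕ}
    (h : (t.toDGraph S).IsCompletePath P u) :
    Reaches S t ((t.toDGraph S).pathEqs P) P.length ((t.toDGraph S).termSet u) :=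
  reaches_of_chainFrom h.2.1 nil_mem_positions subtree_nil h.1

end Strategy

open Strategy

section Greedy

variable {S : Finset Rule} {α E : Finset (ℕ × Option ℕ)} {r : Rule}

lemma len_restrict_union_lt {T : Finset Rule} {cov : Finset ℕ} (hcov : IsNodeCover T cov)
    (hE : ∀ b ∈ cov, ∃ l, (b, l) ∈ E) (hc : ConsistentE (liftK r.K ∪ (α ∪ E)))
    (hT : r.restrict α ∈ T) (hpos : 0 < (r.restrict α).len) :
    (r.restrict (α ∪ E)).len < (r.restrict α).len := by
  obtain ⟨b, hb⟩ := hcov.2 _ hT ((card_pos.1 hpos).image Prod.fst)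
  obtain ⟨⟨b, δ⟩, hbδ, rfl⟩ := mem_image.1 (mem_inter.1 hb).1
  obtain ⟨l, hl⟩ := hE b (mem_inter.1 hb).2
  obtain rfl : l = some δ := hc.eq_some_of_mem (Rule.mem_restrict_K.1 hbδ).1 (mem_union_right _ hl)
  refine card_lt_card ((ssubset_iff_of_subset (Rule.restrict_K_subset subset_union_left)).2
    ⟨(b, δ), hbδ, fun h => (Rule.mem_restrict_K.1 h).2 (mem_union_right _ hl)⟩)

lemma dPar_restrict_union_le_pred {cov : Finset ℕ} (hcov : IsNodeCover (Splus (restrict S α)) cov)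
    (hE : ∀ b ∈ cov, ∃ l, (b, l) ∈ E) :
    dPar (restrict S (α ∪ E)) ≤ dPar (restrict S α) - 1 := by
  refine Finset.sup_le fun r' hr' => ?_
  obtain ⟨r, hr, hc, rfl⟩ := mem_restrict.1 hr'
  have hmem : r.restrict α ∈ restrict S α :=
    restrict_mem_restrict (mem_filter.2 ⟨hr, hc.mono (union_subset_union_right subset_union_left)⟩)
  have hle : (r.restrict α).len ≤ dPar (restrict S α) := le_sup hmem
  have hsub : (r.restrict (α ∪ E)).len ≤ (r.restrict α).len :=
    card_le_card (Rule.restrict_K_subset subset_union_left)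
  by_cases hmax : (r.restrict α).len = dPar (restrict S α) ∧ 0 < (r.restrict α).len
  · have := len_restrict_union_lt hcov hE hc (mem_filter.2 ⟨hmem, hmax.1⟩) hmax.2
    omega
  · omega

def queryAll : List ℕ → (Finset (ℕ × Option ℕ) → Strategy) → Finset (ℕ × Option ℕ) → Strategy
  | [], k, α => k α
  | a :: B, k, α => .query a fun l => queryAll B k (insert (a, l) α)

lemma over_queryAll {B : List ℕ} {k : Finset (ℕ × Option ℕ) → Strategy}
    (hB : ∀ a ∈ B, a ∈ attrs S) (hk : ∀ α, (k α).Over S) : ∀ α, (queryAll B k α).Over S := by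
  induction B with
  | nil => exact hk
  | cons a B ih => exact fun α => ⟨hB a (List.mem_cons_self ..), fun l =>
      ih (fun b hb => hB b (List.mem_cons_of_mem _ hb)) _⟩

lemma Strategy.Reaches.of_queryAll {B : List ℕ} {k : Finset (ℕ × Option ℕ) → Strategy} {m : ℕ}
    {Z : Finset Rule} (h : Reaches S (queryAll B k α) E m Z) :
    ∃ E₁ E₂ m₂, E₁.image Prod.fst = B.toFinset ∧ (∀ p ∈ E₁, p.2 ∈ allowed S true p.1) ∧
      Reaches S (k (α ∪ E₁)) E₂ m₂ Z ∧ E = E₁ ∪ E₂ ∧ m = B.length + m₂ := by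
  induction B generalizing α E m with
  | nil => exact ⟨∅, E, m, by simp, by simp, by simpa [queryAll] using h, by simp, by simp⟩
  | cons a B ih =>
    cases h with
    | @query _ _ l E' m' _ hl h =>
      obtain ⟨E₁, E₂, m₂, hE₁, hval, h₂, rfl, rfl⟩ := ih h
      refine ⟨insert (a, l) E₁, E₂, m₂, by simp [hE₁], ?_, by rwa [union_insert, ← insert_union],
        (insert_union _ _ _).symm, by simp; omega⟩
      simpa [hl] using hval

def greedy (S : Finset Rule) : ℕ → Finset (ℕ × Option ℕ) → Strategy
  | 0, α => .leaf (compatible S α)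
  | f + 1, α => queryAll (minCover (Splus (restrict S α))).toList (greedy S f) α

lemma over_greedy (f : ℕ) : ∀ α, (greedy S f α).Over S := by
  induction f with
  | zero => exact fun α => filter_subset _ _
  | succ f ih =>
    intro α
    refine over_queryAll (fun a ha => ?_) ih α
    exact ((attrs_mono (filter_subset _ _)).trans attrs_restrict_subset)
      ((minCover_isNodeCover _).1 (mem_toList.1 ha))

lemma Strategy.Reaches.of_greedy {f m : ℕ} {Z : Finset Rule} (h : Reaches S (greedy S f α) E m Z)
    (hα : Admissible S α) (hd : dPar (restrict S α) ≤ f) :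
    m ≤ f * beta_EARplus S ∧ Z = compatible S (α ∪ E) ∧ dPar (restrict S (α ∪ E)) = 0 := by
  induction f generalizing α E m with
  | zero =>
    cases h
    exact ⟨by simp, by simp, by simpa using hd⟩
  | succ f ih =>
    obtain ⟨E₁, E₂, m₂, hE₁, hval, h₂, rfl, rfl⟩ := Reaches.of_queryAll h
    have hα₁ : Admissible S (α ∪ E₁) := by
      intro p hp
      rcases mem_union.1 hp with hp | hp
      · exact hα p hp
      refine ⟨?_, hval p hp⟩
      have : p.1 ∈ minCover (Splus (restrict S α)) := by
        simpa [hE₁] using mem_image_of_mem Prod.fst hp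
      exact ((attrs_mono (filter_subset _ _)).trans attrs_restrict_subset)
        ((minCover_isNodeCover _).1 this)
    have hcovE : ∀ b ∈ minCover (Splus (restrict S α)), ∃ l, (b, l) ∈ E₁ := fun b hb => by
      obtain ⟨p, hp, rfl⟩ := mem_image.1 (show b ∈ E₁.image Prod.fst by simpa [hE₁] using hb)
      exact ⟨p.2, hp⟩
    have hd₁ := dPar_restrict_union_le_pred (minCover_isNodeCover _) hcovE
    obtain ⟨hm, hZ, hd0⟩ := ih h₂ hα₁ (by omega)
    refine ⟨?_, by rw [hZ, union_assoc], by rwa [← union_assoc]⟩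
    have hcard : (minCover (Splus (restrict S α))).toList.length ≤ beta_EARplus S := by
      rw [length_toList, card_minCover]
      exact betaPlus_restrict_le hα
    rw [add_mul, one_mul]
    omega

lemma solves_of_dPar_restrict_eq_zero (hd : dPar (restrict S E) = 0) :
    (∀ r ∈ compatible S E, liftK r.K ⊆ E) ∧
      ∀ r ∈ S, r ∉ compatible S E → ¬ ConsistentE (liftK r.K ∪ E) :=
  ⟨fun _ hr => Rule.len_restrict_eq_zero_iff.1
      (Nat.eq_zero_of_le_zero (hd ▸ le_sup (restrict_mem_restrict hr))),
    fun _ hr hrc hc => hrc (mem_filter.2 ⟨hr, hc⟩)⟩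

end Greedy

lemma exists_treeSolvesEAR_depth_le (S : Finset Rule) :
    ∃ G : DGraph, TreeSolvesEAR S G ∧ G.depth ≤ dPar S * beta_EARplus S := by
  set t := greedy S (dPar S) ∅
  have hrun {E : Finset (ℕ × Option ℕ)} {m : ℕ} {Z : Finset Rule} (h : Reaches S t E m Z) :
      m ≤ dPar S * beta_EARplus S ∧ Z = compatible S E ∧ dPar (restrict S E) = 0 := by
    simpa using h.of_greedy (by simp [Admissible]) dPar_restrict_le
  refine ⟨t.toDGraph S, ⟨isDG_toDGraph (over_greedy _ _), isTree_toDGraph, ?_⟩, ?_⟩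
  · intro P u hP _
    obtain ⟨-, hZ, hd⟩ := hrun (reaches_of_isCompletePath hP)
    rw [hZ]
    exact solves_of_dPar_restrict_eq_zero hd
  · refine csSup_le' ?_
    rintro _ ⟨P, u, hP, rfl⟩
    exact (hrun (reaches_of_isCompletePath hP)).1

theorem statement_16_general (S : Finset Rule) (hwf : ∀ r ∈ S, r.WF) :
    max (dPar S) (beta_EAR S) ≤ h_EAR S ∧ h_EAR S ≤ dPar S * beta_EARplus S := by
  obtain ⟨G, hG, hdepth⟩ := exists_treeSolvesEAR_depth_le S
  refine ⟨le_csInf ⟨G.depth, G, hG, rfl⟩ ?_, le_trans (Nat.sInf_le ⟨G, hG, rfl⟩) hdepth⟩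
  rintro _ ⟨G', ⟨hdg, -, hsolve⟩, rfl⟩
  exact max_le (Finset.sup_le fun r hr => len_le_depth hdg hsolve hr (hwf r hr))
    (csSup_le' (by rintro _ ⟨α, hα, rfl⟩; exact beta_restrict_le_depth hdg hsolve hwf hα))

/-- Theorem 4(b): max{d(S), β_EAR(S)} ≤ h_EAR(S) ≤ d(S)·β_EAR⁺(S). -/
theorem statement_16 (S : Finset Rule) (hS : S.Nonempty) (hwf : ∀ r ∈ S, r.WF)
    (hn : 0 < nPar S) :
    max (dPar S) (beta_EAR S) ≤ h_EAR S ∧ h_EAR S ≤ dPar S * beta_EARplus S :=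
  statement_16_general S hwf

end DRS

end
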